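/- Let π be a permutation of {1,...,r} with π(1) = 1, and suppose π has no 'marked point', i.e. π(i+1) ≠ π(i) + 1 for all i = 1,...,r (indices cyclically, with π(r+1) := π(1)). If the restriction of π to {2,...,r} is reducible, i.e. there exists 2 ≤ i₀ < r with π({2,...,i₀}) = {2,...,i₀}, then the cyclic rotation procedure described (moving the block after the invariant set to the front) produces a permutation π₁ cyclically equivalent to π whose minimal invariant initial segment, if it exists, is strictly larger; hence after finitely many rotations one obtains a cyclically equivalent permutation π' with π'(1)=1 whose restriction to {2,...,r} has no invariant initial segment {2,...,i₀} for any 2 ≤ i₀ < r. -/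

import Mathlib

/-!
Indices are 0-based and cyclic, so the paper's normalisation `π(1) = 1` is `π 0 = 0` and its invariant segment
`{2, …, i₀}` becomes, together with the fixed point `0`, an invariant initial segment
`{0, …, ℓ - 1}` with `2 ≤ ℓ < r`.

Normalise each rotation to `i ↦ π (i + c) - π c`, which fixes `0`. If all of them were reducible,
pick `c` whose invariant initial segment has minimal length `ℓ`. The value `v` of the rotation at
`1` lies in the segment and is neither `0` (injectivity) nor `1` (no marked point), so `v - 1` is
attained inside the segment at some `t ≠ 0`. The rotation at `c + 1` then sends `t - 1` to
`(v - 1) - v = -1`, the largest index, so it has no invariant initial segment of length `≥ ℓ`,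
contradicting minimality.
-/

namespace Equiv.Perm

variable {r : ℕ}

def MapsPrefix (σ : Perm (Fin r)) (ℓ : ℕ) : Prop :=
  Set.MapsTo σ {i | (i : ℕ) < ℓ} {i | (i : ℕ) < ℓ}

def IsReducible (σ : Perm (Fin r)) : Prop :=
  ∃ ℓ, 2 ≤ ℓ ∧ ℓ < r ∧ σ.MapsPrefix ℓ

lemma MapsPrefix.exists_apply_eq {σ : Perm (Fin r)} {ℓ : ℕ} (h : σ.MapsPrefix ℓ) {j : Fin r}
    (hj : (j : ℕ) < ℓ) : ∃ i : Fin r, (i : ℕ) < ℓ ∧ σ i = j :=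
  (((Set.toFinite _).injOn_iff_bijOn_of_mapsTo h).mp σ.injective.injOn).surjOn hj

variable [NeZero r]

def rotateAt (π : Perm (Fin r)) (c : Fin r) : Perm (Fin r) :=
  (Equiv.addRight c).trans (π.trans (Equiv.subRight (π c)))

lemma rotateAt_apply (π : Perm (Fin r)) (c i : Fin r) : π.rotateAt c i = π (i + c) - π c :=
  rfl

lemma rotateAt_apply_zero (π : Perm (Fin r)) (c : Fin r) : π.rotateAt c 0 = 0 := by
  rw [rotateAt_apply, zero_add, sub_self]

lemma rotateAt_add_one_apply (π : Perm (Fin r)) (c i : Fin r) :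
    π.rotateAt (c + 1) i = π.rotateAt c (i + 1) - π.rotateAt c 1 := by
  rw [rotateAt_apply, rotateAt_apply, rotateAt_apply, sub_sub_sub_cancel_right,
    add_assoc, add_comm 1 c]

lemma lt_of_mapsPrefix_rotateAt_add_one {π : Perm (Fin r)} (hπ : ∀ i, π (i + 1) ≠ π i + 1)
    {c : Fin r} {ℓ ℓ' : ℕ} (hℓ : 2 ≤ ℓ) (h : (π.rotateAt c).MapsPrefix ℓ) (hℓ' : ℓ' < r)
    (h' : (π.rotateAt (c + 1)).MapsPrefix ℓ') : ℓ' < ℓ := by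
  by_contra! hle
  set σ := π.rotateAt c
  have hone : ((1 : Fin r) : ℕ) = 1 := by rw [Fin.val_one', Nat.mod_eq_of_lt (by omega)]
  have hv : (σ 1 : ℕ) < ℓ := h (show ((1 : Fin r) : ℕ) < ℓ by omega)
  have hv0 : σ 1 ≠ 0 := fun h0 => by
    have := congrArg Fin.val (σ.injective (h0.trans (π.rotateAt_apply_zero c).symm))
    rw [hone, Fin.val_zero] at this
    omega
  have hv1 : σ 1 ≠ 1 := by
    intro h1
    rw [rotateAt_apply, sub_eq_iff_eq_add', add_comm 1 c] at h1
    exact hπ c h1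
  obtain ⟨t, ht, hσt⟩ := h.exists_apply_eq (show ((σ 1 - 1 : Fin r) : ℕ) < ℓ by
    rw [Fin.val_sub_one_of_ne_zero hv0]; omega)
  have ht0 : t ≠ 0 := by
    rintro rfl
    rw [rotateAt_apply_zero, eq_comm, sub_eq_zero] at hσt
    exact hv1 hσt
  have hneg : π.rotateAt (c + 1) (t - 1) = -1 := by
    rw [rotateAt_add_one_apply, sub_add_cancel, hσt, sub_sub_cancel_left]
  have hlast := h' (show ((t - 1 : Fin r) : ℕ) < ℓ' by
    rw [Fin.val_sub_one_of_ne_zero ht0]; omega)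
  rw [Set.mem_ofPred_eq, hneg, Fin.val_neg', hone, Nat.mod_eq_of_lt (by omega)] at hlast
  omega

theorem exists_not_isReducible_rotateAt {π : Perm (Fin r)} (hπ : ∀ i, π (i + 1) ≠ π i + 1) :
    ∃ c, ¬ (π.rotateAt c).IsReducible := by
  by_contra! hred
  suffices ∀ ℓ c, 2 ≤ ℓ → ¬ (π.rotateAt c).MapsPrefix ℓ by
    obtain ⟨ℓ, hℓ, -, h⟩ := hred 0
    exact this ℓ 0 hℓ h
  intro ℓ
  induction ℓ using Nat.strong_induction_on with
  | _ ℓ ih =>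
    intro c hℓ h
    obtain ⟨ℓ', hℓ', hℓ'r, h'⟩ := hred (c + 1)
    exact ih ℓ' (lt_of_mapsPrefix_rotateAt_add_one hπ hℓ h hℓ'r h') (c + 1) hℓ' h'

end Equiv.Perm

theorem exists_irreducible_cyclic_representative_general
    (r : ℕ) [NeZero r] (π : Equiv.Perm (Fin r))
    (hnomark : ∀ i : Fin r, π (i + 1) ≠ π i + 1) :
    ∃ (π' : Equiv.Perm (Fin r)) (c d : Fin r),
      (∀ i, π' i = π (i + c) + d) ∧
      π' 0 = 0 ∧
      ¬ ∃ i0 : ℕ, 1 ≤ i0 ∧ i0 + 1 < r ∧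
        ∀ j : Fin r, 1 ≤ j.val → j.val ≤ i0 →
          (1 ≤ (π' j).val ∧ (π' j).val ≤ i0) := by
  obtain ⟨c, hc⟩ := π.exists_not_isReducible_rotateAt hnomark
  refine ⟨π.rotateAt c, c, -π c, fun i => sub_eq_add_neg _ _, π.rotateAt_apply_zero c, ?_⟩
  rintro ⟨i₀, hi₀, hi₀r, hinv⟩
  refine hc ⟨i₀ + 1, by omega, hi₀r, fun j (hj : (j : ℕ) < i₀ + 1) => ?_⟩
  show ((π.rotateAt c j : Fin r) : ℕ) < i₀ + 1
  rcases eq_or_ne j 0 with rfl | hj0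
  · simp [Equiv.Perm.rotateAt_apply_zero]
  · have := hinv j (Nat.one_le_iff_ne_zero.mpr (Fin.val_ne_zero_iff.mpr hj0)) (by omega)
    omega

/-- Combinatorial core of the "simple cylinder" theorem for Abelian
differentials (0-based indices on `Fin r`, cyclic addition): let `π` be a
permutation of `Fin r` with `π 0 = 0` and no marked point, i.e.
`π (i+1) ≠ π i + 1` for every `i` (cyclically).  Then there is a cyclically
equivalent permutation `π'` (obtained by rotating the two rows:
`π' i = π (i + c) + d`) with `π' 0 = 0` whose restriction to
`{1,…,r-1}` has no invariant initial segment `{1,…,i₀}` with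
`1 ≤ i₀ < r - 1`. -/
theorem exists_irreducible_cyclic_representative
    (r : ℕ) [NeZero r] (hr : 2 ≤ r) (π : Equiv.Perm (Fin r))
    (hfix : π 0 = 0)
    (hnomark : ∀ i : Fin r, π (i + 1) ≠ π i + 1) :
    ∃ (π' : Equiv.Perm (Fin r)) (c d : Fin r),
      (∀ i, π' i = π (i + c) + d) ∧
      π' 0 = 0 ∧
      ¬ ∃ i0 : ℕ, 1 ≤ i0 ∧ i0 + 1 < r ∧
        ∀ j : Fin r, 1 ≤ j.val → j.val ≤ i0 →
          (1 ≤ (π' j).val ∧ (π' j).val ≤ i0) :=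
  exists_irreducible_cyclic_representative_general r π hnomark
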